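/- arXiv:2108.01058 — 2 statements merged into one kernel-verified Lean document; each statement's English description precedes it below -/
import Mathlib

section
/- If a polyhedron G on p vertices with q edges has at least one i-gonal face for every i with 4 ≤ i ≤ n, then 2q ≤ 6p - 12 - (n-3)(n-2). -/
/-! Call `k - 3` the excess of a face of size `k`. There is a face of each excess `1, …, n - 3`,
so the total excess `2q - 3f` is at least `(n - 3)(n - 2) / 2`, and Euler's formula turns
this into the bound. -/

open Finset

theorem Finset.sum_le_sum_of_ne_zero_mem_range {ι M : Type*} [Fintype ι] [DecidableEq M]
    [AddCommMonoid M] [PartialOrder M] [CanonicallyOrderedAdd M] [IsOrderedAddMonoid M]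
    (S : Finset M) (g : ι → M) (hS : ∀ i ∈ S, i ≠ 0 → i ∈ Set.range g) :
    ∑ i ∈ S, i ≤ ∑ x, g x :=
  calc ∑ i ∈ S, i = ∑ i ∈ S with i ≠ 0, i := (sum_filter_ne_zero S).symm
    _ ≤ ∑ i ∈ univ.image g, i := by
      refine sum_le_sum_of_subset fun i hi ↦ ?_
      rw [mem_filter] at hi
      obtain ⟨x, rfl⟩ := hS i hi.1 hi.2
      exact mem_image_of_mem g (mem_univ x)
    _ ≤ ∑ x, g x := sum_image_le_of_nonneg fun _ _ ↦ zero_le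

/-- If a polyhedron with `p` vertices, `q` edges and face multiset given by
`size : F → ℕ` (sum of face sizes `= 2q`, all faces of size `≥ 3`,
Euler's formula) has at least one `i`-gonal face for each `4 ≤ i ≤ n`, then
`2q ≤ 6p - 12 - (n-3)(n-2)`. -/
theorem face_upper_bound {F : Type*} [Fintype F] (size : F → ℕ)
    (n p q f : ℕ) (hn : 3 ≤ n)
    (hf : f = Fintype.card F)
    (hEuler : (p : ℤ) - q + f = 2)
    (hhand : ∑ x, size x = 2 * q)
    (hmin : ∀ x, 3 ≤ size x)
    (hall : ∀ i, 4 ≤ i → i ≤ n → ∃ x, size x = i) :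
    (2 * q : ℤ) ≤ 6 * (p : ℤ) - 12 - ((n : ℤ) - 3) * ((n : ℤ) - 2) := by
  obtain ⟨m, rfl⟩ : ∃ m, n = m + 3 := ⟨n - 3, by omega⟩
  have hexcess : ((∑ x, (size x - 3) : ℕ) : ℤ) = 2 * q - 3 * f := by
    push_cast [Nat.cast_sub (hmin _), sum_sub_distrib, hf]
    simp only [← Nat.cast_sum, hhand, sum_const, card_univ]
    push_cast
    ring
  have hlower : ∑ i ∈ range (m + 1), i ≤ ∑ x, (size x - 3) := by
    refine sum_le_sum_of_ne_zero_mem_range _ _ fun i hi hi0 ↦ ?_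
    obtain ⟨x, hx⟩ := hall (i + 3) (by omega) (by rw [mem_range] at hi; omega)
    exact ⟨x, show size x - 3 = i by omega⟩
  have hgauss : ((∑ i ∈ range (m + 1), i : ℕ) : ℤ) * 2 = (m + 1) * m := by
    exact_mod_cast sum_range_id_mul_two (m + 1)
  push_cast
  nlinarith [(Nat.cast_le (α := ℤ)).mpr hlower]
end

section
/- Let n ≥ 3 and let G be a polyhedron with p vertices and q edges such that every vertex has degree ≥ 3, G has at least one vertex of degree i for every 3 ≤ i ≤ n, every face has size ≥ 3, and G has at least one i-gonal face for every 3 ≤ i ≤ n. Then p ≥ (n² - 5n + 14)/2. -/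
/-!
Counting each vertex with weight `deg v - 3` and using one vertex of each degree `3, …, n` gives
`2q ≥ 3p + (n-2)(n-3)/2`; dually, faces give `2q ≥ 3f + (n-2)(n-3)/2`. Eliminating `f` with Euler's
formula turns the face bound into `2q ≤ 6p - 12 - (n-2)(n-3)`, and comparing the two bounds on `2q`
gives `p ≥ (n-2)(n-3)/2 + 4`.
-/

open Finset

theorem Finset.sum_id_le_sum_of_subset_range {ι N : Type*} [Fintype ι] [DecidableEq N]
    [AddCommMonoid N] [Preorder N] [AddLeftMono N] {g : ι → N} (hg : ∀ i, 0 ≤ g i)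
    {s : Finset N} (hs : ∀ a ∈ s, ∃ i, g i = a) :
    ∑ a ∈ s, a ≤ ∑ i, g i := by
  have hsub : s ⊆ univ.image g := fun a ha => by simpa using hs a ha
  calc ∑ a ∈ s, a ≤ ∑ a ∈ univ.image g, a :=
        sum_le_sum_of_subset_of_nonneg hsub fun a ha _ => by
          obtain ⟨i, -, rfl⟩ := mem_image.mp ha
          exact hg i
    _ ≤ ∑ i, g i := sum_image_le_of_nonneg fun a ha => by
          obtain ⟨i, -, rfl⟩ := mem_image.mp ha
          exact hg i

theorem two_mul_sum_ge_of_forall_three_le_of_exists_eq {T : Type*} [Fintype T] (g : T → ℕ) (n : ℕ)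
    (hmin : ∀ t, 3 ≤ g t) (hall : ∀ i, 3 ≤ i → i ≤ n → ∃ t, g t = i) :
    (n - 2) * (n - 3) + 6 * Fintype.card T ≤ 2 * ∑ t, g t := by
  have hsplit : ∑ t, g t = ∑ t, (g t - 3) + 3 * Fintype.card T := by
    rw [mul_comm, ← smul_eq_mul, ← card_univ, ← sum_const, ← sum_add_distrib]
    exact sum_congr rfl fun t _ => by have := hmin t; omega
  have hexcess : ∑ k ∈ range (n - 2), k ≤ ∑ t, (g t - 3) :=
    sum_id_le_sum_of_subset_range (fun _ => Nat.zero_le _) fun k hk => by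
      obtain ⟨t, ht⟩ := hall (k + 3) (by omega) (by simp at hk; omega)
      exact ⟨t, by omega⟩
  have hgauss := sum_range_id_mul_two (n - 2)
  rw [show n - 2 - 1 = n - 3 by omega] at hgauss
  omega

/-- A polyhedron satisfying property `S_n` (a vertex of degree `i` and an
`i`-gonal face for each `3 ≤ i ≤ n`) has at least `(n² - 5n + 14)/2` vertices. -/
theorem Sn_order_lower_bound {V F : Type*} [Fintype V] [Fintype F]
    (deg : V → ℕ) (size : F → ℕ) (n p q f : ℕ) (hn : 3 ≤ n)
    (hp : p = Fintype.card V) (hf : f = Fintype.card F)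
    (hEuler : (p : ℤ) - q + f = 2)
    (hhandV : ∑ v, deg v = 2 * q)
    (hhandF : ∑ x, size x = 2 * q)
    (hdegmin : ∀ v, 3 ≤ deg v)
    (hdegall : ∀ i, 3 ≤ i → i ≤ n → ∃ v, deg v = i)
    (hsizemin : ∀ x, 3 ≤ size x)
    (hsizeall : ∀ i, 3 ≤ i → i ≤ n → ∃ x, size x = i) :
    (p : ℤ) ≥ ((n : ℤ) ^ 2 - 5 * (n : ℤ) + 14) / 2 := by
  have hV := two_mul_sum_ge_of_forall_three_le_of_exists_eq deg n hdegmin hdegall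
  have hF := two_mul_sum_ge_of_forall_three_le_of_exists_eq size n hsizemin hsizeall
  rw [hhandV, ← hp] at hV
  rw [hhandF, ← hf] at hF
  have hquad : (n : ℤ) ^ 2 - 5 * n + 14 = ((n - 2) * (n - 3) : ℕ) + 8 := by
    push_cast [Nat.cast_sub (by omega : 2 ≤ n), Nat.cast_sub hn]
    ring
  rw [hquad]
  generalize (n - 2) * (n - 3) = m at hV hF
  omega
end
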